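/- With C = CPO and ▷ = (-)_⊥ as above, the guarded fixpoint operator given by least fixed points is not unique: there exists a cpo X and a continuous map f : X_⊥ → X admitting two distinct morphisms s : 1 → X with s = f ∘ p_X ∘ s. Concretely, for X = {0,1} the two-element chain and f : X_⊥ → X with f(⊥) = f(0) = 0 and f(1) = 1, both constant maps 0 and 1 satisfy the fixpoint equation. -/

import Mathlib

/-!
Take `f := WithBot.unbotD ⊥` (here `⊥ = false`), which sends `⊥` and `false` to `false` and
`true` to `true`: then both points of the chain are fixed by `f ∘ p_X`. Continuity is automatic because every
chain in the finite linear order `WithBot Bool` attains its supremum, and monotone maps preserve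
greatest elements.
-/

theorem WithBot.monotone_unbotD_bot {α : Type*} [Preorder α] [OrderBot α] :
    Monotone (WithBot.unbotD (⊥ : α)) := by
  intro x y h
  cases x with
  | bot => exact bot_le
  | coe a => exact WithBot.unbotD_mono WithBot.coe_ne_bot h

theorem IsLUB.mem_of_finite {α : Type*} [LinearOrder α] {s : Set α} {l : α} (hl : IsLUB s l)
    (hs : s.Finite) (hne : s.Nonempty) : l ∈ s := by
  simpa using Finset.isLUB_mem hs.toFinset (by simpa using hl) (by simpa using hne)

theorem Monotone.map_isLUB_of_finite {α β : Type*} [LinearOrder α] [Preorder β] {f : α → β}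
    (hf : Monotone f) {s : Set α} {l : α} (hl : IsLUB s l) (hs : s.Finite) (hne : s.Nonempty) :
    IsLUB (f '' s) (f l) :=
  (hf.map_isGreatest ⟨hl.mem_of_finite hs hne, hl.1⟩).isLUB

theorem stmt4 :
    ∃ f : WithBot Bool → Bool,
      Monotone f ∧
      (∀ c : ℕ → WithBot Bool, Monotone c →
        ∀ l, IsLUB (Set.range c) l → IsLUB (Set.range fun k => f (c k)) (f l)) ∧
      f ⊥ = false ∧ f ((false : Bool) : WithBot Bool) = false ∧
      f ((true : Bool) : WithBot Bool) = true ∧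
      (false : Bool) = f ((false : Bool) : WithBot Bool) ∧
      (true : Bool) = f ((true : Bool) : WithBot Bool) ∧
      (false : Bool) ≠ true := by
  refine ⟨WithBot.unbotD ⊥, WithBot.monotone_unbotD_bot, fun c _ l hl => ?_,
    rfl, rfl, rfl, rfl, rfl, Bool.false_ne_true⟩
  rw [← Function.comp_def, Set.range_comp]
  exact WithBot.monotone_unbotD_bot.map_isLUB_of_finite hl (Set.toFinite _) (Set.range_nonempty c)
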